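/- Suppose n ≥ 1, n·p_l < k ≤ n·ε, and p_l^k (1−p_l)^(n−k) < ε^k (1−ε)^(n−k), and let ε < p ≤ 1. Then the infimum, over all feasible priors μ, of the posterior confidence P(μ,p) equals θ·f(p_l) / (θ·f(p_l) + (1−θ)·f(p)). -/

import Mathlib

/-
The likelihood `f` is unimodal with mode `k / n`, and `p_l < k / n ≤ ε < p`. Hence on `[p_l, ε]`
it is bounded below by `min (f p_l) (f ε) = f p_l`, and on `(p, 1]` it is bounded above by
`f p`. For a feasible prior the mass `θ` of `[p_l, ε]` therefore contributes at least `θ f(p_l)`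
to the numerator, while the remaining mass, at most `1 - θ` on `(p, 1]`, adds at most
`(1 - θ) f(p)` to the denominator only. The bound is approached by the priors
`θ δ_{p_l} + (1 - θ) δ_q` as `q ↓ p`.
-/

open MeasureTheory Set

/-- The Bernoulli likelihood of observing `k` failures in `n` trials. -/
noncomputable def likelihood (k n : ℕ) (x : ℝ) : ℝ := x ^ k * (1 - x) ^ (n - k)

/-- A prior (probability measure on `[0,1]`) is feasible if it assigns mass `θ`
to `[0, ε]` and full mass to `[p_l, 1]`. -/
def Feasible (pl ε θ : ℝ) (μ : Measure ℝ) : Prop :=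
  IsProbabilityMeasure μ ∧ μ (Icc 0 ε) = ENNReal.ofReal θ ∧ μ (Icc pl 1) = 1

/-- The posterior confidence `P(μ, p)` in the bound `p` after observing
`k` failures in `n` miles, with prior `μ`. -/
noncomputable def posterior (k n : ℕ) (μ : Measure ℝ) (p : ℝ) : ℝ :=
  (∫ x in Icc (0 : ℝ) p, likelihood k n x ∂μ) /
    (∫ x in Icc (0 : ℝ) 1, likelihood k n x ∂μ)

lemma le_apply_of_monotoneOn_of_antitoneOn {α β : Type*} [LinearOrder α] [Preorder β]
    {f : α → β} {a b c x : α} (hmono : MonotoneOn f (Icc a c)) (hanti : AntitoneOn f (Icc c b))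
    (hab : f a ≤ f b) (hx : x ∈ Icc a b) : f a ≤ f x := by
  rcases le_or_gt x c with hxc | hcx
  · exact hmono ⟨le_rfl, hx.1.trans hxc⟩ ⟨hx.1, hxc⟩ hx.1
  · exact hab.trans (hanti ⟨hcx.le, hx.2⟩ ⟨hcx.le.trans hx.2, le_rfl⟩ hx.2)

lemma div_add_le_div_add {K : Type*} [Field K] [LinearOrder K] [IsStrictOrderedRing K]
    {a b A B : K} (ha : 0 < a) (haA : a ≤ A) (hB : 0 ≤ B) (hBb : B ≤ b) :
    a / (a + b) ≤ A / (A + B) := by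
  rw [div_le_div_iff₀ (by linarith) (by linarith)]
  nlinarith

section Likelihood

variable {k n : ℕ}

lemma continuous_likelihood (k n : ℕ) : Continuous (likelihood k n) := by
  unfold likelihood
  fun_prop

lemma likelihood_nonneg {x : ℝ} (h0 : 0 ≤ x) (h1 : x ≤ 1) : 0 ≤ likelihood k n x :=
  mul_nonneg (pow_nonneg h0 k) (pow_nonneg (sub_nonneg.2 h1) _)

lemma likelihood_pos {x : ℝ} (h0 : 0 < x) (h1 : x < 1) : 0 < likelihood k n x :=
  mul_pos (pow_pos h0 k) (pow_pos (sub_pos.2 h1) _)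

lemma likelihood_one (hkn : k < n) : likelihood k n 1 = 0 := by
  simp [likelihood, Nat.sub_ne_zero_of_lt hkn]

lemma hasDerivAt_likelihood (hk : 0 < k) (hkn : k < n) (x : ℝ) :
    HasDerivAt (likelihood k n) (x ^ (k - 1) * (1 - x) ^ (n - k - 1) * (k - n * x)) x := by
  obtain ⟨K, rfl⟩ : ∃ K, k = K + 1 := ⟨k - 1, by omega⟩
  obtain ⟨M, rfl⟩ : ∃ M, n = K + 1 + M + 1 := ⟨n - (K + 1) - 1, by omega⟩
  rw [show K + 1 + M + 1 - (K + 1) - 1 = M by omega, Nat.add_sub_cancel]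
  have hlik :
      likelihood (K + 1) (K + 1 + M + 1) = fun y => y ^ (K + 1) * (1 - y) ^ (M + 1) := by
    ext y
    rw [likelihood, show K + 1 + M + 1 - (K + 1) = M + 1 by omega]
  rw [hlik]
  refine ((hasDerivAt_pow (K + 1) x).fun_mul
    (((hasDerivAt_id x).const_sub 1).fun_pow (M + 1))).congr_deriv ?_
  simp only [Nat.add_sub_cancel, id]
  push_cast
  ring

lemma likelihood_monotoneOn (hk : 0 < k) (hkn : k < n) :
    MonotoneOn (likelihood k n) (Icc 0 (k / n)) := by
  have hn : (0 : ℝ) < n := by exact_mod_cast hk.trans hkn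
  have hkn' : (k : ℝ) / n < 1 := (div_lt_one hn).2 (by exact_mod_cast hkn)
  refine monotoneOn_of_hasDerivWithinAt_nonneg (convex_Icc _ _)
    (continuous_likelihood k n).continuousOn
    (fun x _ => (hasDerivAt_likelihood hk hkn x).hasDerivWithinAt) fun x hx => ?_
  rw [interior_Icc] at hx
  have hnx : n * x ≤ k := by rw [← le_div_iff₀' hn]; exact hx.2.le
  exact mul_nonneg (mul_nonneg (pow_nonneg hx.1.le _) (pow_nonneg (by linarith [hx.2]) _))
    (sub_nonneg.2 hnx)

lemma likelihood_antitoneOn (hk : 0 < k) (hkn : k < n) :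
    AntitoneOn (likelihood k n) (Icc (k / n) 1) := by
  have hn : (0 : ℝ) < n := by exact_mod_cast hk.trans hkn
  have hk' : (0 : ℝ) ≤ k / n := by positivity
  refine antitoneOn_of_hasDerivWithinAt_nonpos (convex_Icc _ _)
    (continuous_likelihood k n).continuousOn
    (fun x _ => (hasDerivAt_likelihood hk hkn x).hasDerivWithinAt) fun x hx => ?_
  rw [interior_Icc] at hx
  have hnx : k ≤ n * x := by rw [← div_le_iff₀' hn]; exact hx.1.le
  exact mul_nonpos_of_nonneg_of_nonpos
    (mul_nonneg (pow_nonneg (by linarith [hx.1]) _) (pow_nonneg (by linarith [hx.2]) _))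
    (sub_nonpos.2 hnx)

end Likelihood

namespace Feasible

variable {pl ε θ : ℝ} {μ : Measure ℝ}

lemma measure_Icc (hμ : Feasible pl ε θ μ) (hpl : 0 ≤ pl) (hε : ε ≤ 1) :
    μ (Icc pl ε) = ENNReal.ofReal θ := by
  have := hμ.1
  have hnull : μ (Icc pl 1)ᶜ = 0 := by
    rw [prob_compl_eq_one_sub measurableSet_Icc, hμ.2.2, tsub_self]
  calc μ (Icc pl ε) = μ (Icc 0 ε ∩ Icc pl 1) := by
        rw [Icc_inter_Icc, max_eq_right hpl, min_eq_left hε]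
    _ = ENNReal.ofReal θ := by rw [measure_inter_conull hnull, hμ.2.1]

lemma measureReal_Ioc_le (hμ : Feasible pl ε θ μ) (hθ : 0 ≤ θ) {p : ℝ} (hεp : ε ≤ p) :
    μ.real (Ioc p 1) ≤ 1 - θ := by
  have := hμ.1
  calc μ.real (Ioc p 1) ≤ μ.real (Icc 0 ε)ᶜ :=
        measureReal_mono fun x hx h => (hεp.trans_lt hx.1).not_ge h.2
    _ = 1 - θ := by
        rw [measureReal_compl measurableSet_Icc, probReal_univ, measureReal_def, hμ.2.1,
          ENNReal.toReal_ofReal hθ]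

lemma div_le_posterior {p : ℝ} {k n : ℕ} (hμ : Feasible pl ε θ μ) (hpl : 0 ≤ pl)
    (hplε : pl ≤ ε) (hεp : ε ≤ p) (hp1 : p ≤ 1) (hθ : 0 < θ) (hpos : 0 < likelihood k n pl)
    (hmin : ∀ x ∈ Icc pl ε, likelihood k n pl ≤ likelihood k n x)
    (hdecr : ∀ x ∈ Ioc p 1, likelihood k n x ≤ likelihood k n p) :
    θ * likelihood k n pl / (θ * likelihood k n pl + (1 - θ) * likelihood k n p) ≤
      posterior k n μ p := by
  have := hμ.1
  have hf := continuous_likelihood k n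
  have hp0 : 0 ≤ p := hpl.trans (hplε.trans hεp)
  have hA : θ * likelihood k n pl ≤ ∫ x in Icc 0 p, likelihood k n x ∂μ :=
    calc θ * likelihood k n pl = ∫ _ in Icc pl ε, likelihood k n pl ∂μ := by
          rw [setIntegral_const, measureReal_def, hμ.measure_Icc hpl (hεp.trans hp1),
            ENNReal.toReal_ofReal hθ.le, smul_eq_mul]
      _ ≤ ∫ x in Icc pl ε, likelihood k n x ∂μ :=
          setIntegral_mono_on (integrable_const _) hf.integrableOn_Icc measurableSet_Icc hmin
      _ ≤ ∫ x in Icc 0 p, likelihood k n x ∂μ :=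
          setIntegral_mono_set hf.integrableOn_Icc
            ((ae_restrict_iff' measurableSet_Icc).2 (ae_of_all _ fun x hx =>
              likelihood_nonneg hx.1 (hx.2.trans hp1)))
            (Icc_subset_Icc hpl hεp).eventuallyLE
  have hB : ∫ x in Ioc p 1, likelihood k n x ∂μ ≤ (1 - θ) * likelihood k n p :=
    calc ∫ x in Ioc p 1, likelihood k n x ∂μ ≤ ∫ _ in Ioc p 1, likelihood k n p ∂μ :=
          setIntegral_mono_on (hf.integrableOn_Icc.mono_set Ioc_subset_Icc_self)
            (integrable_const _) measurableSet_Ioc hdecr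
      _ = μ.real (Ioc p 1) * likelihood k n p := by rw [setIntegral_const, smul_eq_mul]
      _ ≤ (1 - θ) * likelihood k n p :=
          mul_le_mul_of_nonneg_right (hμ.measureReal_Ioc_le hθ.le hεp)
            (likelihood_nonneg hp0 hp1)
  have hsplit : ∫ x in Icc 0 1, likelihood k n x ∂μ =
      (∫ x in Icc 0 p, likelihood k n x ∂μ) + ∫ x in Ioc p 1, likelihood k n x ∂μ := by
    rw [← Icc_union_Ioc_eq_Icc hp0 hp1]
    exact setIntegral_union (disjoint_left.2 fun x hx hx' => hx'.1.not_ge hx.2)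
      measurableSet_Ioc hf.integrableOn_Icc (hf.integrableOn_Icc.mono_set Ioc_subset_Icc_self)
  rw [posterior, hsplit]
  exact div_add_le_div_add (mul_pos hθ hpos) hA
    (setIntegral_nonneg measurableSet_Ioc fun x hx =>
      likelihood_nonneg (hp0.trans hx.1.le) hx.2) hB

end Feasible

noncomputable def twoPointMeasure (θ u v : ℝ) : Measure ℝ :=
  ENNReal.ofReal θ • Measure.dirac u + ENNReal.ofReal (1 - θ) • Measure.dirac v

section TwoPointMeasure

variable {θ u v : ℝ}

lemma setIntegral_twoPointMeasure (hθ0 : 0 ≤ θ) (hθ1 : θ ≤ 1) (f : ℝ → ℝ) (s : Set ℝ) :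
    ∫ x in s, f x ∂twoPointMeasure θ u v =
      θ * s.indicator f u + (1 - θ) * s.indicator f v := by
  classical
  have hint : ∀ a, Integrable f ((Measure.dirac a).restrict s) := fun a => by
    rw [restrict_dirac]
    split_ifs
    · exact (integrable_const (f a)).congr (ae_eq_dirac f).symm
    · exact integrable_zero_measure
  rw [twoPointMeasure, Measure.restrict_add, Measure.restrict_smul, Measure.restrict_smul,
    integral_add_measure ((hint u).smul_measure ENNReal.ofReal_ne_top)
      ((hint v).smul_measure ENNReal.ofReal_ne_top),
    integral_smul_measure, integral_smul_measure, ENNReal.toReal_ofReal hθ0,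
    ENNReal.toReal_ofReal (sub_nonneg.2 hθ1), setIntegral_dirac, setIntegral_dirac]
  simp only [indicator_apply, smul_eq_mul]

lemma feasible_twoPointMeasure {pl ε : ℝ} (hθ0 : 0 ≤ θ) (hθ1 : θ ≤ 1) (hpl : 0 ≤ pl)
    (hplε : pl ≤ ε) (hεv : ε < v) (hv1 : v ≤ 1) :
    Feasible pl ε θ (twoPointMeasure θ pl v) := by
  have hsum : ENNReal.ofReal θ + ENNReal.ofReal (1 - θ) = 1 := by
    rw [← ENNReal.ofReal_add hθ0 (sub_nonneg.2 hθ1), add_sub_cancel, ENNReal.ofReal_one]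
  have hv : v ∉ Icc 0 ε := fun h => hεv.not_ge h.2
  refine ⟨⟨by simp [twoPointMeasure, hsum]⟩, ?_, ?_⟩
  · simp [twoPointMeasure, Measure.dirac_apply' _ measurableSet_Icc, hpl, hplε, hv]
  · simp [twoPointMeasure, Measure.dirac_apply' _ measurableSet_Icc,
      hplε.trans (hεv.le.trans hv1), hplε.trans hεv.le, hv1, hsum]

end TwoPointMeasure

lemma mem_closure_posteriors {k n : ℕ} {pl ε θ p : ℝ} (hkn : k < n) (hpl : 0 ≤ pl)
    (hplε : pl ≤ ε) (hεp : ε < p) (hp1 : p ≤ 1) (hθ0 : 0 ≤ θ) (hθ1 : θ ≤ 1)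
    (hden : θ * likelihood k n pl + (1 - θ) * likelihood k n p ≠ 0) :
    θ * likelihood k n pl / (θ * likelihood k n pl + (1 - θ) * likelihood k n p) ∈
      closure {y | ∃ μ, Feasible pl ε θ μ ∧ posterior k n μ p = y} := by
  have hpost : ∀ q ∈ Icc (0 : ℝ) 1, posterior k n (twoPointMeasure θ pl q) p =
      (θ * likelihood k n pl + (1 - θ) * (Icc 0 p).indicator (likelihood k n) q) /
        (θ * likelihood k n pl + (1 - θ) * likelihood k n q) := fun q hq => by
    rw [posterior, setIntegral_twoPointMeasure hθ0 hθ1, setIntegral_twoPointMeasure hθ0 hθ1,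
      indicator_of_mem (show pl ∈ Icc 0 p from ⟨hpl, hplε.trans hεp.le⟩),
      indicator_of_mem (show pl ∈ Icc 0 1 from ⟨hpl, hplε.trans (hεp.le.trans hp1)⟩),
      indicator_of_mem hq]
  rcases hp1.lt_or_eq with hp1 | rfl
  · have hg : ContinuousWithinAt
        (fun q => θ * likelihood k n pl / (θ * likelihood k n pl + (1 - θ) * likelihood k n q))
        (Ioc p 1) p :=
      (continuousAt_const.div (continuousAt_const.add (continuousAt_const.mul
        (continuous_likelihood k n).continuousAt)) hden).continuousWithinAt
    have hp : p ∈ closure (Ioc p 1) := by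
      rw [closure_Ioc hp1.ne]
      exact left_mem_Icc.2 hp1.le
    refine closure_mono ?_ (hg.mem_closure_image hp)
    rintro _ ⟨q, hq, rfl⟩
    refine ⟨twoPointMeasure θ pl q,
      feasible_twoPointMeasure hθ0 hθ1 hpl hplε (hεp.trans hq.1) hq.2, ?_⟩
    rw [hpost q ⟨(hpl.trans hplε).trans (hεp.trans hq.1).le, hq.2⟩,
      indicator_of_notMem (fun h => hq.1.not_ge h.2), mul_zero, add_zero]
  · -- at `p = 1` the likelihood vanishes at the second atom, so the bound is attained
    refine subset_closure ⟨twoPointMeasure θ pl 1,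
      feasible_twoPointMeasure hθ0 hθ1 hpl hplε hεp le_rfl, ?_⟩
    have h1 : (1 : ℝ) ∈ Icc 0 1 := right_mem_Icc.2 zero_le_one
    rw [hpost 1 h1, indicator_of_mem h1, likelihood_one hkn, mul_zero, add_zero]

theorem stmt_4_general (k n : ℕ) (pl ε θ p : ℝ)
    (hpl : 0 < pl) (hple : pl < ε) (hε1 : ε < 1)
    (hθ0 : 0 < θ) (hθ1 : θ ≤ 1)
    (hk1 : (n : ℝ) * pl < k) (hk2 : (k : ℝ) ≤ n * ε)
    (hlik : pl ^ k * (1 - pl) ^ (n - k) < ε ^ k * (1 - ε) ^ (n - k))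
    (hεp : ε < p) (hp1 : p ≤ 1) :
    sInf {y : ℝ | ∃ μ : Measure ℝ, Feasible pl ε θ μ ∧ posterior k n μ p = y} =
      θ * likelihood k n pl /
        (θ * likelihood k n pl + (1 - θ) * likelihood k n p) := by
  have hk : 0 < k := Nat.cast_pos (α := ℝ) |>.1 (lt_of_le_of_lt (by positivity) hk1)
  have hn : (0 : ℝ) < n :=
    pos_of_mul_pos_left ((Nat.cast_pos.2 hk).trans_le hk2) (hpl.trans hple).le
  have hkn : k < n := by exact_mod_cast hk2.trans_lt (mul_lt_of_lt_one_right hn hε1)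
  have hkε : (k : ℝ) / n ≤ ε := by rw [div_le_iff₀' hn]; exact hk2
  have hmin : ∀ x ∈ Icc pl ε, likelihood k n pl ≤ likelihood k n x := fun x hx =>
    le_apply_of_monotoneOn_of_antitoneOn
      ((likelihood_monotoneOn hk hkn).mono (Icc_subset_Icc_left hpl.le))
      ((likelihood_antitoneOn hk hkn).mono (Icc_subset_Icc_right hε1.le)) hlik.le hx
  have hdecr : ∀ x ∈ Ioc p 1, likelihood k n x ≤ likelihood k n p := fun x hx =>
    likelihood_antitoneOn hk hkn ⟨hkε.trans hεp.le, hp1⟩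
      ⟨(hkε.trans hεp.le).trans hx.1.le, hx.2⟩ hx.1.le
  have hpos : 0 < likelihood k n pl := likelihood_pos hpl (hple.trans hε1)
  have hden : 0 < θ * likelihood k n pl + (1 - θ) * likelihood k n p :=
    add_pos_of_pos_of_nonneg (mul_pos hθ0 hpos) (mul_nonneg (sub_nonneg.2 hθ1)
      (likelihood_nonneg ((hpl.trans (hple.trans hεp)).le) hp1))
  have hV := mem_closure_posteriors hkn hpl.le hple.le hεp hp1 hθ0.le hθ1 hden.ne'
  refine (isGLB_of_mem_closure ?_ hV).csInf_eq (closure_nonempty_iff.1 ⟨_, hV⟩)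
  rintro _ ⟨μ, hμ, rfl⟩
  exact hμ.div_le_posterior hpl.le hple.le hεp.le hp1 hθ0 hpos hmin hdecr

theorem stmt_4 (k n : ℕ) (hkn : k ≤ n) (hn : 1 ≤ n) (pl ε θ p : ℝ)
    (hpl : 0 < pl) (hple : pl < ε) (hε1 : ε < 1)
    (hθ0 : 0 < θ) (hθ1 : θ ≤ 1)
    (hk1 : (n : ℝ) * pl < k) (hk2 : (k : ℝ) ≤ n * ε)
    (hlik : pl ^ k * (1 - pl) ^ (n - k) < ε ^ k * (1 - ε) ^ (n - k))
    (hεp : ε < p) (hp1 : p ≤ 1) :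
    sInf {y : ℝ | ∃ μ : Measure ℝ, Feasible pl ε θ μ ∧ posterior k n μ p = y} =
      θ * likelihood k n pl /
        (θ * likelihood k n pl + (1 - θ) * likelihood k n p) :=
  stmt_4_general k n pl ε θ p hpl hple hε1 hθ0 hθ1 hk1 hk2 hlik hεp hp1
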